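/- Let (V,d) be a finite metric space with n ≥ 2 points and distinct pairwise distances. Let L_NUV be the length of the NUV walk from v_0, and let L_TSP be the minimal length over all enumerations of V starting at v_0 of the sum of consecutive distances. Then L_NUV ≤ 2·L_TSP·(1 + log n). -/

import Mathlib

/-!
Let `d` be the `k`-th longest step of the greedy walk. The `k` steps of length at least `d`
start at `k` points that are pairwise at distance at least `d`, by the greedy choice. Along the
tour `t`, parametrised by arc length in `[0, L]`, distances are bounded by differences of arc
length, so these points sit at positions pairwise at least `d` apart, whence `(k - 1) d ≤ L`;
also `d ≤ L`. Thus `k d ≤ 2 L`, and summing over `k` gives `L_NUV ≤ 2 L H_n ≤ 2 L (1 + log n)`.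
-/

/-- The length `D(v_i)` of the step taken from the `i`-th visited point. -/
noncomputable def stepLen {V : Type*} [MetricSpace V] {n : ℕ} (e : Fin n → V) (i : Fin n) : ℝ :=
  if h : i.val + 1 < n then dist (e i) (e ⟨i.val + 1, h⟩) else 0

/-- Total length of the walk `e`. -/
noncomputable def walkLen {V : Type*} [MetricSpace V] {n : ℕ} (e : Fin n → V) : ℝ :=
  ∑ i : Fin n, stepLen e i

/-- `e` is a nearest-unvisited-vertex (greedy) order. -/
def IsNUV {V : Type*} [MetricSpace V] {n : ℕ} (e : Fin n → V) : Prop :=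
  ∀ i j : Fin n, i < j → stepLen e i ≤ dist (e i) (e j)

/-- All pairwise distances between distinct points are distinct. -/
def DistinctDistances (V : Type*) [MetricSpace V] : Prop :=
  ∀ a b c d : V, a ≠ b → c ≠ d → dist a b = dist c d → (a = c ∧ b = d) ∨ (a = d ∧ b = c)

open Finset

theorem sum_le_mul_harmonic_of_card_mul_le {ι : Type*} (s : Finset ι) (f : ι → ℝ) (C : ℝ)
    (hf : ∀ i ∈ s, 0 ≤ f i) (h : ∀ i ∈ s, #{j ∈ s | f i ≤ f j} * f i ≤ C) :
    ∑ i ∈ s, f i ≤ C * harmonic #s := by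
  classical
  induction s using Finset.induction_on_min_value f with
  | empty => simp
  | insert a s ha hmin ih =>
    have hall : {j ∈ insert a s | f a ≤ f j} = insert a s :=
      filter_true_of_mem fun j hj => (mem_insert.mp hj).elim (fun h => h ▸ le_rfl) (hmin j)
    have hfa : (#s + 1) * f a ≤ C := by
      simpa [hall, card_insert_of_notMem ha] using h a (mem_insert_self a s)
    have hs : ∑ i ∈ s, f i ≤ C * harmonic #s := by
      refine ih (fun i hi => hf i (mem_insert_of_mem hi)) fun i hi => ?_
      refine le_trans ?_ (h i (mem_insert_of_mem hi))
      gcongr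
      · exact hf i (mem_insert_of_mem hi)
      · exact subset_insert a s
    rw [sum_insert ha, card_insert_of_notMem ha, harmonic_succ]
    push_cast
    have hfa' : f a ≤ C * (#s + 1 : ℝ)⁻¹ := by
      rw [← div_eq_mul_inv, le_div_iff₀ (by positivity)]; linarith
    linarith

theorem card_sub_one_mul_le_of_separated {ι : Type*} (s : Finset ι) (x : ι → ℝ) {r L : ℝ}
    (hr : 0 < r) (hL : 0 ≤ L) (hx : ∀ i ∈ s, x i ∈ Set.Icc 0 L)
    (hsep : ∀ i ∈ s, ∀ j ∈ s, i ≠ j → r ≤ |x i - x j|) :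
    (#s - 1 : ℝ) * r ≤ L := by
  have hcard : #s ≤ ⌊L / r⌋₊ + 1 := by
    rw [← card_range (⌊L / r⌋₊ + 1)]
    refine card_le_card_of_injOn (fun i => ⌊x i / r⌋₊) (fun i hi => ?_) fun i hi j hj hij => ?_
    · simp only [coe_range, Set.mem_Iio, Nat.lt_succ_iff]
      exact Nat.floor_mono (div_le_div_of_nonneg_right (hx i hi).2 hr.le)
    · by_contra hne
      have hi0 := div_nonneg (hx i hi).1 hr.le
      have hj0 := div_nonneg (hx j hj).1 hr.le
      have hclose : |x i / r - x j / r| < 1 := Int.abs_sub_lt_one_of_floor_eq_floor <| by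
        rw [← Int.natCast_floor_eq_floor hi0, ← Int.natCast_floor_eq_floor hj0]
        exact congrArg _ hij
      rw [← sub_div, abs_div, abs_of_pos hr, div_lt_one hr] at hclose
      exact (hsep i hi j hj hne).not_gt hclose
  have hcard' : (#s - 1 : ℝ) ≤ L / r := by
    have hfloor := Nat.floor_le (div_nonneg hL hr.le)
    have hcast : (#s : ℝ) ≤ ⌊L / r⌋₊ + 1 := by exact_mod_cast hcard
    linarith
  rwa [le_div_iff₀ hr] at hcard'

section Walk

variable {V : Type*} [MetricSpace V] {n : ℕ}

theorem stepLen_nonneg (t : Fin n → V) (i : Fin n) : 0 ≤ stepLen t i := by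
  unfold stepLen
  split_ifs <;> positivity

theorem walkLen_nonneg (t : Fin n → V) : 0 ≤ walkLen t :=
  sum_nonneg fun i _ => stepLen_nonneg t i

noncomputable def arcLen (t : Fin n → V) (a : Fin n) : ℝ :=
  ∑ i with i < a, stepLen t i

theorem arcLen_nonneg (t : Fin n → V) (a : Fin n) : 0 ≤ arcLen t a :=
  sum_nonneg fun i _ => stepLen_nonneg t i

theorem arcLen_le_walkLen (t : Fin n → V) (a : Fin n) : arcLen t a ≤ walkLen t :=
  sum_le_sum_of_subset_of_nonneg (filter_subset _ _) fun i _ _ => stepLen_nonneg t i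

theorem arcLen_succ (t : Fin n → V) (k : ℕ) (hk : k + 1 < n) :
    arcLen t ⟨k + 1, hk⟩ = arcLen t ⟨k, by omega⟩ + dist (t ⟨k, by omega⟩) (t ⟨k + 1, hk⟩) := by
  have hfilter : univ.filter (· < (⟨k + 1, hk⟩ : Fin n)) =
      insert ⟨k, by omega⟩ (univ.filter (· < (⟨k, by omega⟩ : Fin n))) := by
    ext i
    simp only [mem_filter_univ, mem_insert, Fin.lt_def, Fin.ext_iff]
    omega
  rw [arcLen, hfilter, sum_insert (by simp), stepLen, dif_pos hk, add_comm, arcLen]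

theorem dist_le_arcLen_sub (t : Fin n → V) {a b : Fin n} (hab : a ≤ b) :
    dist (t a) (t b) ≤ arcLen t b - arcLen t a := by
  obtain ⟨b, hb⟩ := b
  induction b with
  | zero =>
    obtain rfl : a = ⟨0, hb⟩ := Fin.ext (Nat.le_zero.mp hab)
    simp
  | succ k ih =>
    rcases hab.lt_or_eq with hlt | rfl
    · have hak : a ≤ ⟨k, by omega⟩ := Fin.le_def.mpr (Nat.lt_succ_iff.mp hlt)
      calc dist (t a) (t ⟨k + 1, hb⟩)
          ≤ dist (t a) (t ⟨k, by omega⟩) + dist (t ⟨k, by omega⟩) (t ⟨k + 1, hb⟩) :=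
            dist_triangle _ _ _
        _ ≤ arcLen t ⟨k, by omega⟩ - arcLen t a + dist (t ⟨k, by omega⟩) (t ⟨k + 1, hb⟩) := by
            gcongr; exact ih (by omega) hak
        _ = arcLen t ⟨k + 1, hb⟩ - arcLen t a := by rw [arcLen_succ]; ring
    · simp

theorem dist_le_abs_arcLen_sub (t : Fin n → V) (a b : Fin n) :
    dist (t a) (t b) ≤ |arcLen t a - arcLen t b| := by
  rcases le_total a b with hab | hba
  · rw [abs_sub_comm]; exact (dist_le_arcLen_sub t hab).trans (le_abs_self _)
  · rw [dist_comm]; exact (dist_le_arcLen_sub t hba).trans (le_abs_self _)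

theorem dist_le_walkLen (t : Fin n ≃ V) (u v : V) : dist u v ≤ walkLen t := by
  simpa using (dist_le_abs_arcLen_sub t (t.symm u) (t.symm v)).trans <|
    abs_sub_le_of_nonneg_of_le (arcLen_nonneg _ _) (arcLen_le_walkLen _ _)
      (arcLen_nonneg _ _) (arcLen_le_walkLen _ _)

theorem stepLen_le_walkLen (e : Fin n → V) (t : Fin n ≃ V) (i : Fin n) :
    stepLen e i ≤ walkLen t := by
  unfold stepLen
  split_ifs
  exacts [dist_le_walkLen t _ _, walkLen_nonneg t]

end Walk

namespace IsNUV

variable {V : Type*} [MetricSpace V] {n : ℕ} {e : Fin n → V}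

theorem le_dist (he : IsNUV e) {r : ℝ} {j k : Fin n} (hjk : j ≠ k)
    (hj : r ≤ stepLen e j) (hk : r ≤ stepLen e k) : r ≤ dist (e j) (e k) := by
  rcases hjk.lt_or_gt with hlt | hgt
  · exact hj.trans (he j k hlt)
  · rw [dist_comm]; exact hk.trans (he k j hgt)

theorem card_mul_stepLen_le (he : IsNUV e) (t : Fin n ≃ V) (i : Fin n) :
    #{j | stepLen e i ≤ stepLen e j} * stepLen e i ≤ 2 * walkLen t := by
  rcases (stepLen_nonneg e i).eq_or_lt with hzero | hpos
  · rw [← hzero, mul_zero]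
    linarith [walkLen_nonneg t]
  · have hpack := card_sub_one_mul_le_of_separated {j | stepLen e i ≤ stepLen e j}
      (fun j => arcLen t (t.symm (e j))) hpos (walkLen_nonneg t)
      (fun j _ => ⟨arcLen_nonneg _ _, arcLen_le_walkLen _ _⟩) fun j hj k hk hjk =>
        (he.le_dist hjk (mem_filter.mp hj).2 (mem_filter.mp hk).2).trans <| by
          simpa using dist_le_abs_arcLen_sub t (t.symm (e j)) (t.symm (e k))
    linarith [stepLen_le_walkLen e t i]

end IsNUV

/-- Corollary 1 (with explicit constant): for every Hamiltonian path `t` from the same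
starting point — in particular for the shortest one, of length `L_TSP` — the NUV walk
satisfies `L_NUV ≤ 2·L_TSP·(1 + log n)`. -/
theorem stmt4 {V : Type*} [MetricSpace V] {n : ℕ}
    (e : Fin n ≃ V) (hNUV : IsNUV (⇑e))
    (t : Fin n ≃ V) :
    walkLen (⇑e) ≤ 2 * walkLen (⇑t) * (1 + Real.log n) :=
  calc walkLen e ≤ 2 * walkLen t * harmonic n := by
        simpa [walkLen] using sum_le_mul_harmonic_of_card_mul_le univ (stepLen e) _
          (fun i _ => stepLen_nonneg e i) fun i _ => hNUV.card_mul_stepLen_le t i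
    _ ≤ 2 * walkLen t * (1 + Real.log n) := by
        gcongr
        · linarith [walkLen_nonneg t]
        · exact harmonic_le_one_add_log n
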